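/- arXiv:2109.05300 — 7 statements merged into one kernel-verified Lean document; each statement's English description precedes it below -/
import Mathlib

section
/- Sequential composition of ground logic programs is not left-distributive over union: there exist ground programs P, Q, R such that P ∘ (Q ∪ R) ≠ (P ∘ Q) ∪ (P ∘ R). Concretely, with P = {a ← b,c}, Q = {b} (the fact b), R = {c}, we have P ∘ (Q ∪ R) = {a} while (P ∘ Q) ∪ (P ∘ R) = ∅. -/
/-- A ground logic program over atoms `A`: a set of rules `(head, body)`. -/
abbrev Program (A : Type*) := Set (A × Set A)

/-- Sequential composition: resolve each body atom of a rule of `P`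
with a matching rule head from `R`. -/
def comp {A : Type*} (P R : Program A) : Program A :=
  {q | ∃ r ∈ P, ∃ s : A → A × Set A,
    (∀ a ∈ r.2, s a ∈ R ∧ (s a).1 = a) ∧ q = (r.1, ⋃ a ∈ r.2, (s a).2)}

/-- The unit program `1 = {A ← A | A an atom}`. -/
def unitP (A : Type*) : Program A := {p | p.2 = {p.1}}

/-- Partial unit program `1^I`. -/
def unitOn {A : Type*} (I : Set A) : Program A := {p | p.1 ∈ I ∧ p.2 = {p.1}}

/-- An interpretation `I ⊆ A` viewed as a program of facts. -/
def factsP {A : Type*} (I : Set A) : Program A := {p | p.1 ∈ I ∧ p.2 = ∅}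

/-- The facts (rules with empty body) of a program. -/
def factsOf {A : Type*} (P : Program A) : Program A := {r ∈ P | r.2 = ∅}

/-- The proper rules (nonempty body) of a program. -/
def properOf {A : Type*} (P : Program A) : Program A := {r ∈ P | r.2 ≠ ∅}

/-- `I^⊖ := 1^{A−I} ∪ I`. -/
def Iminus {A : Type*} (I : Set A) : Program A :=
  {p | (p.1 ∉ I ∧ p.2 = {p.1}) ∨ (p.1 ∈ I ∧ p.2 = ∅)}

/-- `I^⊕ := {(a, {a} ∪ I) | a ∈ A}`. -/
def Iplus {A : Type*} (I : Set A) : Program A := {p | p.2 = insert p.1 I}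

/-- The Herbrand base as a program of facts. -/
def HBp (A : Type*) : Program A := {p | p.2 = ∅}

/-- Heads of a program. -/
def headsOf {A : Type*} (P : Program A) : Set A := Prod.fst '' P

/-- Bodies (union of all rule bodies) of a program. -/
def bodiesOf {A : Type*} (P : Program A) : Set A := ⋃ r ∈ P, r.2

/-- The dual of a program: keep facts, reverse proper rules. -/
def dual {A : Type*} (P : Program A) : Program A :=
  factsOf P ∪ {q | ∃ r ∈ P, r.2 ≠ ∅ ∧ q.1 ∈ r.2 ∧ q.2 = {r.1}}

/-- van Emden–Kowalski operator. -/
def TP {A : Type*} (P : Program A) (I : Set A) : Set A :=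
  {a | ∃ r ∈ P, r.1 = a ∧ r.2 ⊆ I}

/-- One-step reducibility: `P ≲ R` iff `P = (Q ∘ R) ∘ S` for some `Q`, `S`. -/
def red {A : Type*} (P R : Program A) : Prop :=
  ∃ Q S : Program A, P = comp (comp Q R) S

/-- Syntactic similarity. -/
def simP {A : Type*} (P R : Program A) : Prop := red P R ∧ red R P

theorem comp_not_left_distrib :
    let a : Fin 3 := 0; let b : Fin 3 := 1; let c : Fin 3 := 2
    let P : Program (Fin 3) := {(a, {b, c})}
    let Q : Program (Fin 3) := {(b, ∅)}
    let R : Program (Fin 3) := {(c, ∅)}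
    comp P (Q ∪ R) = {(a, ∅)} ∧
    comp P Q ∪ comp P R = ∅ ∧
    comp P (Q ∪ R) ≠ comp P Q ∪ comp P R := by
  intro a b c P Q R
  have h1 : comp P (Q ∪ R) = {(a, ∅)} := by
    ext q
    constructor
    · rintro ⟨r, hr, s, hs, hq⟩
      simp only [P, Set.mem_singleton_iff] at hr
      subst hr
      have hb := hs b (by simp)
      have hc := hs c (by simp)
      simp only [Q, R, Set.mem_union, Set.mem_singleton_iff] at hb hc
      have hsb : (s b).2 = ∅ := by
        rcases hb.1 with h | h <;> simp [h]
      have hsc : (s c).2 = ∅ := by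
        rcases hc.1 with h | h <;> simp [h]
      simp only [Set.mem_singleton_iff]
      rw [hq]
      have : (⋃ x ∈ ((a, ({b, c} : Set (Fin 3))) : Fin 3 × Set (Fin 3)).2, (s x).2) = ∅ := by
        simp [Set.biUnion_insert, hsb, hsc]
      rw [this]
    · intro hq
      simp only [Set.mem_singleton_iff] at hq
      refine ⟨(a, {b, c}), rfl, fun x => (x, ∅), ?_, ?_⟩
      · intro x hx
        simp only [Set.mem_insert_iff, Set.mem_singleton_iff] at hx
        rcases hx with h | h <;> subst h <;> simp [Q, R]
      · rw [hq]; simp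
  have h2 : comp P Q ∪ comp P R = ∅ := by
    ext q
    simp only [Set.mem_union, Set.mem_empty_iff_false, iff_false]
    rintro (⟨r, hr, s, hs, _⟩ | ⟨r, hr, s, hs, _⟩)
    · simp only [P, Set.mem_singleton_iff] at hr; subst hr
      have hc := hs c (by simp)
      simp only [Q, Set.mem_singleton_iff] at hc
      have := hc.2
      rw [hc.1] at this
      exact absurd this (by decide)
    · simp only [P, Set.mem_singleton_iff] at hr; subst hr
      have hb := hs b (by simp)
      simp only [R, Set.mem_singleton_iff] at hb
      have := hb.2
      rw [hb.1] at this
      exact absurd this (by decide)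
  refine ⟨h1, h2, ?_⟩
  rw [h1, h2]
  intro h
  exact absurd (h ▸ rfl : (a, (∅:Set (Fin 3))) ∈ (∅ : Program (Fin 3))) (by simp)
end

section
/- For every ground program P and interpretation I (a set of atoms, viewed as a program of facts), T_P(I) = P ∘ I, where T_P is the van Emden–Kowalski immediate consequence operator T_P(I) = {head r | r ∈ P, body r ⊆ I}. -/
theorem TP_eq_comp {A : Type*} (P : Program A) (I : Set A) :
    factsP (TP P I) = comp P (factsP I) := by
  ext q
  constructor
  · rintro ⟨⟨r, hrP, hr1, hr2⟩, hq2⟩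
    refine ⟨r, hrP, fun a => (a, ∅), fun a ha => ⟨⟨hr2 ha, rfl⟩, rfl⟩, ?_⟩
    ext1
    · exact hr1.symm
    · simp [hq2]
  · rintro ⟨r, hrP, s, hs, rfl⟩
    refine ⟨⟨r, hrP, rfl, fun a ha => ?_⟩, ?_⟩
    · have := hs a ha
      rw [← this.2]; exact this.1.1
    · simp only [factsP]
      ext x
      simp only [Set.mem_iUnion]
      constructor
      · rintro ⟨a, ha, hx⟩
        rw [(hs a ha).1.2] at hx
        exact hx.elim
      · exact fun h => h.elim
end

section
/- For ground atoms A₀, A₁: the program {A₀ ← A₁} cannot be one-step reduced to the single fact {A₀}, i.e., there exist no programs Q, S with {A₀ ← A₁} = (Q ∘ {A₀}) ∘ S; but {A₀} = ({A₀ ← A₁} ∘ {A₁}) holds with the fact A₁, so {A₀} ≲ {A₀ ← A₁}. Hence {A₀} < {A₀ ← A₁} strictly. -/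
theorem fact_strictly_below_rule {A : Type*} (A0 A1 : A) (h : A0 ≠ A1) :
    (¬ ∃ Q S : Program A, ({(A0, {A1})} : Program A) = comp (comp Q {(A0, (∅ : Set A))}) S) ∧
    ({(A0, (∅ : Set A))} : Program A) = comp {(A0, {A1})} {(A1, (∅ : Set A))} ∧
    red ({(A0, (∅ : Set A))} : Program A) ({(A0, {A1})} : Program A) := by
  refine ⟨?_, ?_, ?_⟩
  · rintro ⟨Q, S, hQS⟩
    have hmem : ((A0, ({A1} : Set A)) : A × Set A) ∈ ({(A0, {A1})} : Program A) :=
      Set.mem_singleton _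
    rw [hQS] at hmem
    obtain ⟨r, hr, s, hs, heq⟩ := hmem
    -- r ∈ comp Q {(A0, ∅)}, so r.2 = ∅
    obtain ⟨r', hr', s', hs', heq'⟩ := hr
    have hr2 : r.2 = ∅ := by
      rw [heq']
      simp only [Set.eq_empty_iff_forall_notMem, Set.mem_iUnion]
      rintro x ⟨a, ha, hx⟩
      have := (hs' a ha).1
      rw [Set.mem_singleton_iff] at this
      rw [this] at hx
      exact hx
    have : ({A1} : Set A) = ⋃ a ∈ r.2, (s a).2 := congrArg Prod.snd heq
    rw [hr2] at this
    simp at this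
  · ext ⟨a, b⟩
    constructor
    · rintro hab
      rw [Set.mem_singleton_iff, Prod.mk.injEq] at hab
      obtain ⟨ha, hb⟩ := hab
      refine ⟨(A0, {A1}), Set.mem_singleton _, fun _ => (A1, ∅), ?_, ?_⟩
      · intro x hx
        rw [Set.mem_singleton_iff] at hx
        exact ⟨Set.mem_singleton _, hx.symm⟩
      · simp [ha, hb]
    · rintro ⟨r, hr, s, hs, heq⟩
      rw [Set.mem_singleton_iff] at hr
      subst hr
      have hb : (⋃ a ∈ (({A1} : Set A)), (s a).2) = ∅ := by
        simp only [Set.eq_empty_iff_forall_notMem, Set.mem_iUnion]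
        rintro x ⟨a, ha, hx⟩
        have := (hs a ha).1
        rw [Set.mem_singleton_iff] at this
        rw [this] at hx
        exact hx
      rw [heq]
      exact Set.mem_singleton_iff.mpr (Prod.ext rfl hb)
  · refine ⟨{(A0, {A0})}, {(A1, (∅ : Set A))}, ?_⟩
    have h1 : comp ({(A0, {A0})} : Program A) {(A0, {A1})} = {(A0, {A1})} := by
      ext ⟨a, b⟩
      constructor
      · rintro ⟨r, hr, s, hs, heq⟩
        rw [Set.mem_singleton_iff] at hr
        subst hr
        have h0 := hs A0 rfl
        rw [Set.mem_singleton_iff] at h0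
        rw [heq]
        simp [h0.1]
      · rintro hab
        rw [Set.mem_singleton_iff] at hab
        refine ⟨(A0, {A0}), Set.mem_singleton _, fun _ => (A0, {A1}), ?_, ?_⟩
        · intro x hx
          rw [Set.mem_singleton_iff] at hx
          exact ⟨Set.mem_singleton _, hx.symm⟩
        · simp [hab]
    rw [h1]
    -- now reduces to part 2
    ext ⟨a, b⟩
    constructor
    · rintro hab
      rw [Set.mem_singleton_iff, Prod.mk.injEq] at hab
      obtain ⟨ha, hb⟩ := hab
      refine ⟨(A0, {A1}), Set.mem_singleton _, fun _ => (A1, ∅), ?_, ?_⟩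
      · intro x hx
        rw [Set.mem_singleton_iff] at hx
        exact ⟨Set.mem_singleton _, hx.symm⟩
      · simp [ha, hb]
    · rintro ⟨r, hr, s, hs, heq⟩
      rw [Set.mem_singleton_iff] at hr
      subst hr
      have hb : (⋃ a ∈ (({A1} : Set A)), (s a).2) = ∅ := by
        simp only [Set.eq_empty_iff_forall_notMem, Set.mem_iUnion]
        rintro x ⟨a, ha, hx⟩
        have := (hs a ha).1
        rw [Set.mem_singleton_iff] at this
        rw [this] at hx
        exact hx
      rw [heq]
      exact Set.mem_singleton_iff.mpr (Prod.ext rfl hb)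
end

section
/- For ground atoms A₀, A₁, …, A_k with k ≥ 1, the programs {A₀ ← A₁} and {A₀ ← A₁,…,A_k} are syntactically similar: {A₀ ← A₁} = {A₀ ← A₁,…,A_k} ∘ {A₂,…,A_k}^⊖ and {A₀ ← A₁,…,A_k} = {A₀ ← A₁} ∘ {A₂,…,A_k}^⊕. -/
lemma comp_single_unit {A : Type*} (A0 : A) (B : Set A) :
    comp ({(A0, {A0})} : Program A) ({(A0, B)} : Program A) = {(A0, B)} := by
  ext q
  constructor
  · rintro ⟨r, hr, s, hs, hq⟩
    rw [Set.mem_singleton_iff] at hr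
    rw [hr] at hs hq
    obtain ⟨h1, -⟩ := hs A0 rfl
    rw [Set.mem_singleton_iff] at h1
    simp only [hq, Set.mem_singleton_iff]
    simp [h1]
  · rintro rfl
    exact ⟨(A0, {A0}), rfl, fun _ => (A0, B),
      fun a ha => by simp_all, by simp⟩

lemma part1 {A : Type*} (A0 A1 : A) (I : Set A) (h : A1 ∉ I) :
    ({(A0, {A1})} : Program A) = comp {(A0, insert A1 I)} (Iminus I) := by
  classical
  ext q
  constructor
  · rintro rfl
    refine ⟨(A0, insert A1 I), rfl, fun a => if a ∈ I then (a, ∅) else (a, {a}), ?_, ?_⟩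
    · intro a ha
      by_cases hI : a ∈ I <;> simp [Iminus, hI]
    · simp only [Prod.mk.injEq, true_and]
      ext x
      simp only [Set.mem_iUnion, Set.mem_singleton_iff]
      constructor
      · intro hx
        exact ⟨A1, Set.mem_insert _ _, by simp [h, hx]⟩
      · rintro ⟨a, ha, hx⟩
        rcases Set.mem_insert_iff.mp ha with h1 | h2
        · subst h1; simpa [h] using hx
        · simp [h2] at hx
  · rintro ⟨r, hr, s, hs, hq⟩
    rw [Set.mem_singleton_iff] at hr
    rw [hr] at hs hq
    simp only [hq, Set.mem_singleton_iff, Prod.mk.injEq, true_and]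
    ext x
    simp only [Set.mem_iUnion, Set.mem_singleton_iff]
    constructor
    · rintro ⟨a, ha, hx⟩
      have ha' : a = A1 ∨ a ∈ I := Set.mem_insert_iff.mp ha
      obtain ⟨hm, hhead⟩ := hs a ha
      rcases hm with ⟨hn, he⟩ | ⟨hi, he⟩
      · rw [he, hhead] at hx
        rcases ha' with rfl | ha'
        · exact hx
        · rw [hhead] at hn; exact absurd ha' hn
      · rw [he] at hx; exact absurd hx (Set.notMem_empty x)
    · intro hx
      obtain ⟨hm, hhead⟩ := hs A1 (Set.mem_insert _ _)
      rcases hm with ⟨-, he⟩ | ⟨hi, -⟩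
      · exact ⟨A1, Set.mem_insert _ _, by rw [he, hhead]; exact hx⟩
      · rw [hhead] at hi; exact absurd hi h

lemma part2 {A : Type*} (A0 A1 : A) (I : Set A) :
    ({(A0, insert A1 I)} : Program A) = comp {(A0, {A1})} (Iplus I) := by
  ext q
  constructor
  · rintro rfl
    exact ⟨(A0, {A1}), rfl, fun a => (a, insert a I),
      fun a _ => ⟨rfl, rfl⟩, by simp⟩
  · rintro ⟨r, hr, s, hs, hq⟩
    rw [Set.mem_singleton_iff] at hr
    rw [hr] at hs hq
    obtain ⟨hm, hhead⟩ := hs A1 rfl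
    have : (s A1).2 = insert A1 I := by rw [hm, hhead]
    simp [hq, this]

theorem single_body_similar_many_body {A : Type*} (A0 A1 : A) (I : Set A) (h : A1 ∉ I) :
    ({(A0, {A1})} : Program A) = comp {(A0, insert A1 I)} (Iminus I) ∧
    ({(A0, insert A1 I)} : Program A) = comp {(A0, {A1})} (Iplus I) ∧
    simP ({(A0, {A1})} : Program A) ({(A0, insert A1 I)} : Program A) := by
  refine ⟨part1 A0 A1 I h, part2 A0 A1 I, ?_, ?_⟩
  · exact ⟨{(A0, {A0})}, Iminus I, by rw [comp_single_unit]; exact part1 A0 A1 I h⟩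
  · exact ⟨{(A0, {A0})}, Iplus I, by rw [comp_single_unit]; exact part2 A0 A1 I⟩
end

section
/- For every ground program P: facts(P) ≲ P and P ≲ 1 ∪ facts(P). In particular facts(P) = P ∘ ∅ and P = ((1 ∪ facts(P)) ∘ proper(P)) when composition is taken with the unit program 1, using right-distributivity and facts ∘ proper(P) = facts(P). -/
lemma comp_empty_right {A : Type*} (P : Program A) : comp P (∅ : Program A) = factsOf P := by
  ext q
  constructor
  · rintro ⟨r, hr, s, hs, rfl⟩
    rcases Set.eq_empty_or_nonempty r.2 with h | ⟨a, ha⟩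
    · have : (r.1, ⋃ a ∈ r.2, (s a).2) = r := by
        rw [Prod.ext_iff]; simp [h]
      rw [this]
      exact ⟨hr, h⟩
    · exact absurd (hs a ha).1 (Set.notMem_empty _)
  · rintro ⟨hq, h2⟩
    refine ⟨q, hq, fun a => (a, ∅), ?_, ?_⟩
    · intro a ha; rw [h2] at ha; exact absurd ha (Set.notMem_empty _)
    · rw [h2]; simp [Prod.ext_iff, h2]

lemma comp_unit_left {A : Type*} (R : Program A) : comp (unitP A) R = R := by
  ext q
  constructor
  · rintro ⟨r, hr, s, hs, rfl⟩
    have h2 : r.2 = {r.1} := hr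
    have hm : r.1 ∈ r.2 := by rw [h2]; rfl
    obtain ⟨hs1, hs2⟩ := hs r.1 hm
    have : (r.1, ⋃ a ∈ r.2, (s a).2) = s r.1 := by
      rw [h2, Set.biUnion_singleton, Prod.ext_iff]; exact ⟨hs2.symm, rfl⟩
    rw [this]; exact hs1
  · intro hq
    refine ⟨(q.1, {q.1}), rfl, fun _ => q, ?_, ?_⟩
    · intro a ha
      rcases ha with rfl
      exact ⟨hq, rfl⟩
    · simp

lemma unit_facts_decomp {A : Type*} (P : Program A) :
    P = comp (unitP A ∪ factsOf P) (properOf P) := by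
  ext q
  constructor
  · intro hq
    by_cases h : q.2 = ∅
    · refine ⟨q, Or.inr ⟨hq, h⟩, fun a => (a, ∅), ?_, ?_⟩
      · intro a ha; rw [h] at ha; exact absurd ha (Set.notMem_empty _)
      · rw [h]; simp [Prod.ext_iff, h]
    · refine ⟨(q.1, {q.1}), Or.inl rfl, fun _ => q, ?_, ?_⟩
      · intro a ha; rcases ha with rfl; exact ⟨⟨hq, h⟩, rfl⟩
      · simp
  · rintro ⟨r, hr, s, hs, rfl⟩
    rcases hr with h | ⟨hrP, h2⟩
    · have h2 : r.2 = {r.1} := h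
      have hm : r.1 ∈ r.2 := by rw [h2]; rfl
      obtain ⟨hs1, hs2⟩ := hs r.1 hm
      have : (r.1, ⋃ a ∈ r.2, (s a).2) = s r.1 := by
        rw [h2, Set.biUnion_singleton, Prod.ext_iff]; exact ⟨hs2.symm, rfl⟩
      rw [this]; exact hs1.1
    · have : (r.1, ⋃ a ∈ r.2, (s a).2) = r := by rw [Prod.ext_iff]; simp [h2]
      rw [this]; exact hrP

theorem facts_red_and_unit_facts {A : Type*} (P : Program A) :
    red (factsOf P) P ∧ red P (unitP A ∪ factsOf P) ∧
    factsOf P = comp P ∅ ∧ P = comp (unitP A ∪ factsOf P) (properOf P) := by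
  refine ⟨⟨factsOf P, ∅, ?_⟩, ⟨unitP A, properOf P, ?_⟩, (comp_empty_right P).symm, unit_facts_decomp P⟩
  · rw [comp_empty_right]
    have hfc : comp (factsOf P) P = factsOf P := by
      ext q
      constructor
      · rintro ⟨r, ⟨hrP, h2⟩, s, hs, rfl⟩
        have : (r.1, ⋃ a ∈ r.2, (s a).2) = r := by rw [Prod.ext_iff]; simp [h2]
        rw [this]; exact ⟨hrP, h2⟩
      · rintro ⟨hq, h2⟩
        refine ⟨q, ⟨hq, h2⟩, fun a => (a, ∅), ?_, ?_⟩
        · intro a ha; rw [h2] at ha; exact absurd ha (Set.notMem_empty _)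
        · rw [Prod.ext_iff]; simp [h2]
    rw [hfc]
    ext q
    constructor
    · rintro ⟨hq, h2⟩; exact ⟨⟨hq, h2⟩, h2⟩
    · rintro ⟨⟨hq, h2⟩, _⟩; exact ⟨hq, h2⟩
  · rw [comp_unit_left]
    exact unit_facts_decomp P
end

section
/- For every ground program P: P ≈ facts(P) if and only if P = facts(P). -/
lemma comp_facts_empty {A : Type*} {X F : Program A} (hF : ∀ r ∈ F, r.2 = ∅) :
    ∀ q ∈ comp X F, q.2 = ∅ := by
  rintro q ⟨r, hr, s, hs, rfl⟩
  simp only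
  apply Set.eq_empty_iff_forall_notMem.2
  intro x hx
  simp only [Set.mem_iUnion] at hx
  obtain ⟨a, ha, hxa⟩ := hx
  rw [hF _ (hs a ha).1] at hxa
  exact hxa

lemma facts_comp {A : Type*} {P : Program A} (hP : ∀ r ∈ P, r.2 = ∅)
    (S : Program A) : comp P S = P := by
  ext q
  constructor
  · rintro ⟨r, hr, s, _, rfl⟩
    have h2 := hP r hr
    have : (⋃ a ∈ r.2, (s a).2) = (∅ : Set A) := by simp [h2]
    rw [this, ← h2]
    exact hr
  · intro hq
    refine ⟨q, hq, fun a => (a, ∅), ?_, ?_⟩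
    · intro a ha; rw [hP q hq] at ha; exact absurd ha (Set.notMem_empty a)
    · have h2 := hP q hq
      rw [show (⋃ a ∈ q.2, ((fun a => ((a : A), (∅ : Set A))) a).2) = (∅ : Set A) by simp [h2]]
      rw [← h2]

lemma unit_comp {A : Type*} {P : Program A} (hP : ∀ r ∈ P, r.2 = ∅) :
    comp (unitP A) P = P := by
  ext q
  constructor
  · rintro ⟨r, hr, s, hs, rfl⟩
    have hr2 : r.2 = {r.1} := hr
    rw [hr2] at hs ⊢
    obtain ⟨hmem, hhead⟩ := hs r.1 rfl
    have : (⋃ a ∈ ({r.1} : Set A), (s a).2) = (s r.1).2 := by simp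
    rw [this]
    have heq : s r.1 = (r.1, (s r.1).2) := Prod.ext hhead rfl
    rw [← heq]
    exact hmem
  · intro hq
    refine ⟨(q.1, {q.1}), rfl, fun _ => q, ?_, ?_⟩
    · intro a ha
      simp only [Set.mem_singleton_iff] at ha
      exact ⟨hq, ha.symm⟩
    · simp

theorem similar_to_facts_iff {A : Type*} (P : Program A) :
    simP P (factsOf P) ↔ P = factsOf P := by
  constructor
  · rintro ⟨⟨Q, S, hPQS⟩, _⟩
    have hF : ∀ r ∈ factsOf P, r.2 = ∅ := fun r hr => hr.2
    have h1 : ∀ q ∈ comp Q (factsOf P), q.2 = ∅ := comp_facts_empty hF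
    have h2 : ∀ q ∈ P, q.2 = ∅ := by
      rw [hPQS, facts_comp h1]; exact h1
    ext r
    constructor
    · intro hr; exact ⟨hr, h2 r hr⟩
    · intro hr; exact hr.1
  · intro h
    have hP : ∀ r ∈ factsOf P, r.2 = ∅ := fun r hr => hr.2
    have hred : red (factsOf P) (factsOf P) := by
      refine ⟨unitP A, unitP A, ?_⟩
      rw [unit_comp hP, facts_comp hP]
    have hidem : factsOf (factsOf P) = factsOf P := by
      ext r; exact ⟨fun hr => hr.1, fun hr => ⟨hr, hr.2⟩⟩
    rw [h, hidem]
    exact ⟨hred, hred⟩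
end

section
/- Over atoms {a,b}, the program R = {a ← b, b ← b} satisfies R = π ∘ R where π = {a ← b, b ← a}, hence R ≲ π; but there are no programs Q, S with π = (Q ∘ R) ∘ S, so π ≴ R. Hence R < π strictly. -/
theorem R_strictly_below_swap :
    let a : Fin 2 := 0; let b : Fin 2 := 1
    let R : Program (Fin 2) := {(a, {b}), (b, {b})}
    let π : Program (Fin 2) := {(a, {b}), (b, {a})}
    R = comp π R ∧ red R π ∧ ¬ ∃ Q S : Program (Fin 2), π = comp (comp Q R) S := by
  intro a b R π
  have hab : a ≠ b := by decide
  have part1 : R = comp π R := by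
    ext q
    constructor
    · intro hq
      simp only [R, Set.mem_insert_iff, Set.mem_singleton_iff] at hq
      obtain rfl | rfl := hq
      · exact ⟨(a, {b}), Or.inl rfl, fun _ => (b, {b}),
          fun x hx => ⟨Or.inr rfl, by simp [(show x = b from by simpa using hx)]⟩, by simp⟩
      · exact ⟨(b, {a}), Or.inr rfl, fun _ => (a, {b}),
          fun x hx => ⟨Or.inl rfl, by simp [(show x = a from by simpa using hx)]⟩, by simp⟩
    · rintro ⟨r, (rfl | rfl), s, hs, rfl⟩
      · obtain ⟨hsb, hb⟩ := hs b (by simp)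
        have : s b = (b, {b}) := by
          rcases hsb with h | h
          · exfalso; rw [h] at hb; exact absurd hb (by decide)
          · exact h
        left; simp [this]
      · obtain ⟨hsa, ha⟩ := hs a (by simp)
        have : s a = (a, {b}) := by
          rcases hsa with h | h
          · exact h
          · exfalso; rw [h] at ha; exact absurd ha (by decide)
        right; simp [this]
  refine ⟨part1, ⟨π, R, ?_⟩, ?_⟩
  · -- R = comp (comp π π) R
    have hππ : comp π π = ({(a, {a}), (b, {b})} : Program (Fin 2)) := by
      ext q
      constructor
      · rintro ⟨r, (rfl | rfl), s, hs, rfl⟩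
        · obtain ⟨hsb, hb⟩ := hs b (by simp)
          have : s b = (b, {a}) := by
            rcases hsb with h | h
            · exfalso; rw [h] at hb; exact absurd hb (by decide)
            · exact h
          left; simp [this]
        · obtain ⟨hsa, ha⟩ := hs a (by simp)
          have : s a = (a, {b}) := by
            rcases hsa with h | h
            · exact h
            · exfalso; rw [h] at ha; exact absurd ha (by decide)
          right; simp [this]
      · intro hq
        simp only [Set.mem_insert_iff, Set.mem_singleton_iff] at hq
        obtain rfl | rfl := hq
        · exact ⟨(a, {b}), Or.inl rfl, fun _ => (b, {a}),
            fun x hx => ⟨Or.inr rfl, by simp [(show x = b from by simpa using hx)]⟩, by simp⟩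
        · exact ⟨(b, {a}), Or.inr rfl, fun _ => (a, {b}),
            fun x hx => ⟨Or.inl rfl, by simp [(show x = a from by simpa using hx)]⟩, by simp⟩
    rw [hππ]
    -- R = comp {(a,{a}),(b,{b})} R
    ext q
    constructor
    · intro hq
      simp only [R, Set.mem_insert_iff, Set.mem_singleton_iff] at hq
      obtain rfl | rfl := hq
      · exact ⟨(a, {a}), Or.inl rfl, fun _ => (a, {b}),
          fun x hx => ⟨Or.inl rfl, by simp [(show x = a from by simpa using hx)]⟩, by simp⟩
      · exact ⟨(b, {b}), Or.inr rfl, fun _ => (b, {b}),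
          fun x hx => ⟨Or.inr rfl, by simp [(show x = b from by simpa using hx)]⟩, by simp⟩
    · rintro ⟨r, hr, s, hs, rfl⟩
      simp only [Set.mem_insert_iff, Set.mem_singleton_iff] at hr
      obtain rfl | rfl := hr
      · obtain ⟨hsa, ha⟩ := hs a (by simp)
        have : s a = (a, {b}) := by
          rcases hsa with h | h
          · exact h
          · exfalso; rw [h] at ha; exact absurd ha (by decide)
        left; simp [this]
      · obtain ⟨hsb, hb⟩ := hs b (by simp)
        have : s b = (b, {b}) := by
          rcases hsb with h | h
          · exfalso; rw [h] at hb; exact absurd hb (by decide)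
          · exact h
        right; simp [this]
  · -- no Q S with π = (Q ∘ R) ∘ S
    rintro ⟨Q, S, hQS⟩
    -- every rule of comp Q R has body ∅ or {b}
    have hbody : ∀ r ∈ comp Q R, r.2 = ∅ ∨ r.2 = {b} := by
      rintro r ⟨r', _, s, hs, rfl⟩
      have key : ∀ x ∈ r'.2, (s x).2 = {b} := by
        intro x hx
        obtain ⟨hm, _⟩ := hs x hx
        rcases hm with h | h
        · rw [h]
        · simp only [Set.mem_singleton_iff] at h; rw [h]
      by_cases h : r'.2 = ∅
      · left; simp [h]
      · right
        obtain ⟨x0, hx0⟩ := Set.nonempty_iff_ne_empty.mpr h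
        ext y
        simp only [Set.mem_iUnion, Set.mem_singleton_iff]
        constructor
        · rintro ⟨x, hx, hy⟩; rw [key x hx] at hy; simpa using hy
        · rintro rfl; exact ⟨x0, hx0, by rw [key x0 hx0]; simp⟩
    -- extract the two witnesses
    have hmem1 : ((a, {b}) : Fin 2 × Set (Fin 2)) ∈ comp (comp Q R) S := by
      rw [← hQS]; exact Or.inl rfl
    have hmem2 : ((b, {a}) : Fin 2 × Set (Fin 2)) ∈ comp (comp Q R) S := by
      rw [← hQS]; exact Or.inr rfl
    obtain ⟨r1, hr1, s1, hs1, he1⟩ := hmem1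
    obtain ⟨r2, hr2, s2, hs2, he2⟩ := hmem2
    have hr1h : r1.1 = a := (Prod.ext_iff.mp he1).1.symm
    have hr1b : r1.2 = {b} := by
      rcases hbody r1 hr1 with h | h
      · exfalso
        have := (Prod.ext_iff.mp he1).2
        rw [h] at this; simp at this
      · exact h
    -- (b,{a}) ∈ S
    have hsbS : ((b, {a}) : Fin 2 × Set (Fin 2)) ∈ S := by
      rcases hbody r2 hr2 with h | h
      · exfalso
        have := (Prod.ext_iff.mp he2).2
        rw [h] at this; simp at this
      · obtain ⟨hm, hh⟩ := hs2 b (by rw [h]; simp)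
        have hu : ({a} : Set (Fin 2)) = (s2 b).2 := by
          have := (Prod.ext_iff.mp he2).2
          rw [h] at this; simpa using this
        have : s2 b = (b, {a}) := Prod.ext hh (hu.symm)
        rwa [← this]
    -- now (a,{a}) ∈ comp (comp Q R) S = π
    have habs : ((a, {a}) : Fin 2 × Set (Fin 2)) ∈ π := by
      rw [hQS]
      refine ⟨r1, hr1, fun _ => (b, {a}), ?_, ?_⟩
      · intro x hx
        rw [hr1b] at hx
        exact ⟨hsbS, (show x = b from by simpa using hx).symm⟩
      · rw [hr1h, hr1b]; simp
    rcases habs with h | h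
    · exact hab (Set.singleton_eq_singleton_iff.mp (Prod.ext_iff.mp h).2)
    · exact hab (Prod.ext_iff.mp (Set.mem_singleton_iff.mp h)).1
end
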